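/- arXiv:2508.04262 — 4 statements merged into one kernel-verified Lean document; each statement's English description precedes it below -/
import Mathlib

section
/- Let q ≥ 16 and m ≥ 3 be integers. Define A = (1/2)((q^m-1)/(q-1))^2, B = ((q^m-1)/(2(q-1)^2(q+1)))(4q^{m-1} - q^{m+1} - q^m + q - 3), C = -(q^{2m} + q^m + 1), and Δ = B^2 - 4AC. Then 7q^{2m+4}(q^m-1)^2/(4(q-1)^4(q+1)^2) ≤ Δ ≤ q^{2m+5}(q^m-1)^2/(8(q-1)^4(q+1)^2). -/
/-!
Writing `x = q^m` and `E = 4q^{m-1} - q^{m+1} - q^m + q - 3`, the discriminant factors as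
`Δ = (x - 1)^2 / (4(q-1)^4(q+1)^2) * (E^2 + 8(q-1)^2(q+1)^2(x^2 + x + 1))`,
so both bounds are bounds on the second factor. Dropping `E^2` gives the lower bound as soon as
`8(q^2-1)^2 ≥ 7q^4`; for the upper bound, `|E| ≤ (q+1)q^m` and the second factor is then
dominated by `8q^4 x^2 ≤ q^5 x^2 / 2`.
-/

lemma discriminant_eq_mul (q x E : ℝ) (hq₁ : q - 1 ≠ 0) (hq₂ : q + 1 ≠ 0) :
    ((x - 1) / (2 * (q - 1) ^ 2 * (q + 1)) * E) ^ 2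
        - 4 * ((1 / 2) * ((x - 1) / (q - 1)) ^ 2) * (-(x ^ 2 + x + 1)) =
      (x - 1) ^ 2 / (4 * (q - 1) ^ 4 * (q + 1) ^ 2) *
        (E ^ 2 + 8 * (q - 1) ^ 2 * (q + 1) ^ 2 * (x ^ 2 + x + 1)) := by
  field_simp
  ring

lemma seven_mul_pow_four_mul_sq_le (q x : ℝ) (hq : 4 ≤ q) (hx : 0 ≤ x) :
    7 * q ^ 4 * x ^ 2 ≤ 8 * (q - 1) ^ 2 * (q + 1) ^ 2 * (x ^ 2 + x + 1) := by
  have hq4 : 0 ≤ q ^ 4 - 16 * q ^ 2 + 8 := by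
    nlinarith [mul_nonneg (sq_nonneg q) (by nlinarith : (0 : ℝ) ≤ q ^ 2 - 16)]
  nlinarith [mul_nonneg hq4 (sq_nonneg x), mul_nonneg (by positivity : (0 : ℝ) ≤ (q ^ 2 - 1) ^ 2) hx]

lemma sq_bracket_le (q : ℝ) (m : ℕ) (hq : 4 ≤ q) (hm : 1 ≤ m) :
    (4 * q ^ (m - 1) - q ^ (m + 1) - q ^ m + q - 3) ^ 2 ≤ (q + 1) ^ 2 * (q ^ m) ^ 2 := by
  obtain ⟨k, rfl⟩ := Nat.exists_eq_add_of_le' hm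
  have hy : 1 ≤ q ^ k := one_le_pow₀ (by linarith)
  rw [← mul_pow, Nat.add_sub_cancel, pow_succ q (k + 1), pow_succ q k]
  apply sq_le_sq' <;> nlinarith [mul_nonneg (sub_nonneg.2 hy) (by linarith : (0 : ℝ) ≤ q - 4)]

lemma sq_add_eight_mul_le (q x : ℝ) (hq : 16 ≤ q) (hx : q ^ 2 ≤ x) :
    (q + 1) ^ 2 * x ^ 2 + 8 * (q - 1) ^ 2 * (q + 1) ^ 2 * (x ^ 2 + x + 1) ≤ q ^ 5 * x ^ 2 / 2 := by
  have hx0 : 0 ≤ x := le_trans (sq_nonneg q) hx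
  have hqx : q ^ 2 * x ≤ x ^ 2 := by nlinarith
  have hq4 : q ^ 4 ≤ x ^ 2 := by nlinarith
  have h8 : 0 ≤ (q - 16) * q ^ 4 * x ^ 2 := by
    have : 0 ≤ q - 16 := by linarith
    positivity
  nlinarith [mul_le_mul_of_nonneg_left hqx (sq_nonneg q)]

/-- bounds on the discriminant Δ for q ≥ 16, m ≥ 3. -/
theorem stmt2 (q m : ℕ) (hq : 16 ≤ q) (hm : 3 ≤ m)
    (A B C Δ : ℝ)
    (hA : A = (1 / 2) * (((q : ℝ) ^ m - 1) / ((q : ℝ) - 1)) ^ 2)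
    (hB : B = (((q : ℝ) ^ m - 1) / (2 * ((q : ℝ) - 1) ^ 2 * ((q : ℝ) + 1))) *
      (4 * (q : ℝ) ^ (m - 1) - (q : ℝ) ^ (m + 1) - (q : ℝ) ^ m + (q : ℝ) - 3))
    (hC : C = -((q : ℝ) ^ (2 * m) + (q : ℝ) ^ m + 1))
    (hΔ : Δ = B ^ 2 - 4 * A * C) :
    7 * (q : ℝ) ^ (2 * m + 4) * ((q : ℝ) ^ m - 1) ^ 2 /
      (4 * ((q : ℝ) - 1) ^ 4 * ((q : ℝ) + 1) ^ 2) ≤ Δ ∧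
    Δ ≤ (q : ℝ) ^ (2 * m + 5) * ((q : ℝ) ^ m - 1) ^ 2 /
      (8 * ((q : ℝ) - 1) ^ 4 * ((q : ℝ) + 1) ^ 2) := by
  have hq' : (16 : ℝ) ≤ q := by exact_mod_cast hq
  have hq₁ : (q : ℝ) - 1 ≠ 0 := by linarith
  have hq₂ : (q : ℝ) + 1 ≠ 0 := by linarith
  set E := 4 * (q : ℝ) ^ (m - 1) - (q : ℝ) ^ (m + 1) - (q : ℝ) ^ m + (q : ℝ) - 3
  set D := ((q : ℝ) ^ m - 1) ^ 2 / (4 * ((q : ℝ) - 1) ^ 4 * ((q : ℝ) + 1) ^ 2) with hD_def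
  have hD : 0 ≤ D := by positivity
  have hΔ' : Δ = D * (E ^ 2 + 8 * ((q : ℝ) - 1) ^ 2 * ((q : ℝ) + 1) ^ 2 *
      (((q : ℝ) ^ m) ^ 2 + (q : ℝ) ^ m + 1)) := by
    rw [hΔ, hA, hB, hC, pow_mul', ← discriminant_eq_mul _ _ _ hq₁ hq₂]
  have hx : (q : ℝ) ^ 2 ≤ (q : ℝ) ^ m := pow_le_pow_right₀ (by linarith) (by omega)
  constructor
  · calc _ = D * (7 * (q : ℝ) ^ 4 * ((q : ℝ) ^ m) ^ 2) := by rw [hD_def]; ring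
      _ ≤ Δ := by
        rw [hΔ']
        gcongr
        linarith [sq_nonneg E, seven_mul_pow_four_mul_sq_le q (q ^ m) (by linarith) (by positivity)]
  · calc
      Δ ≤ D * ((q : ℝ) ^ 5 * ((q : ℝ) ^ m) ^ 2 / 2) := by
        rw [hΔ']
        gcongr
        linarith [sq_bracket_le q m (by linarith) (by omega), sq_add_eight_mul_le q _ hq' hx]
      _ = _ := by rw [hD_def]; field_simp; ring
end

section
/- Let q ≥ 16 and m ≥ 3 be integers, and let A, B, C, Δ be as follows: A = (1/2)((q^m-1)/(q-1))^2, B = ((q^m-1)/(2(q-1)^2(q+1)))(4q^{m-1} - q^{m+1} - q^m + q - 3), C = -(q^{2m}+q^m+1), Δ = B^2 - 4AC. If t is a real number with t = (-B + √Δ)/(2A), then q ≤ t ≤ q^{3/2}. -/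
/-!
`t` is the larger root of `f(z) = A z² + B z + C`, and `A > 0`, `C < 0`. Hence `q ≤ t` follows from
`f(q) ≤ 0`, and `t ≤ q^{3/2}` from `f(q^{3/2}) ≥ 0`. Clearing the positive denominator
`2 (q-1)² (q+1)` and writing `Y = q^{m-1} ≥ q²`, both signs become polynomial inequalities in
`q` and `Y` (resp. `√q` and `Y`), which hold coefficientwise once `q = 16 + p`, `Y = q² + W`
(resp. `√q = 4 + r`, `Y = q² + W`) with `p, r, W ≥ 0`.
-/

open Real

section QuadraticRoot

variable {a b c x : ℝ}

theorem le_quadratic_root (ha : 0 < a) (hx : a * (x * x) + b * x + c ≤ 0) :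
    x ≤ (-b + √(discrim a b c)) / (2 * a) := by
  have hsq : (2 * a * x + b) ^ 2 ≤ discrim a b c := by
    rw [discrim]; nlinarith
  rw [le_div_iff₀ (by positivity)]
  linarith [le_abs_self (2 * a * x + b), abs_le_sqrt hsq]

theorem quadratic_root_le (ha : 0 < a) (hc : c ≤ 0) (hx₀ : 0 < x)
    (hx : 0 ≤ a * (x * x) + b * x + c) :
    (-b + √(discrim a b c)) / (2 * a) ≤ x := by
  have hvertex : 0 ≤ 2 * a * x + b := by nlinarith
  have hsqrt : √(discrim a b c) ≤ 2 * a * x + b := by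
    rw [sqrt_le_left hvertex, discrim]; nlinarith
  rw [div_le_iff₀ (by positivity)]
  linarith

end QuadraticRoot

/-- `2 (q-1)² (q+1) (A z² + B z + C)` for the coefficients of the theorem, with `Y = q^{m-1}`. -/
def scaledQuadratic (q Y z : ℝ) : ℝ :=
  (q * Y - 1) ^ 2 * (q + 1) * (z * z) + (q * Y - 1) * (4 * Y - q ^ 2 * Y - q * Y + q - 3) * z
    - 2 * (q - 1) ^ 2 * (q + 1) * ((q * Y) ^ 2 + q * Y + 1)

section ScaledQuadratic

variable {q Y : ℝ}

theorem scaledQuadratic_self_nonpos (hq : 16 ≤ q) (hY : q ^ 2 ≤ Y) :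
    scaledQuadratic q Y q ≤ 0 := by
  obtain ⟨p, hp, rfl⟩ : ∃ p, 0 ≤ p ∧ q = 16 + p := ⟨q - 16, by linarith, by ring⟩
  obtain ⟨W, hW, rfl⟩ : ∃ W, 0 ≤ W ∧ Y = (16 + p) ^ 2 + W := ⟨Y - (16 + p) ^ 2, by linarith, by ring⟩
  rw [← neg_nonneg, scaledQuadratic]
  ring_nf
  positivity

theorem scaledQuadratic_sqrt_cube_nonneg (hq : 16 ≤ q) (hY : q ^ 2 ≤ Y) :
    0 ≤ scaledQuadratic q Y (√q ^ 3) := by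
  obtain ⟨s, hs, rfl⟩ : ∃ s, 4 ≤ s ∧ q = s ^ 2 :=
    ⟨√q, le_sqrt_of_sq_le (by linarith), (sq_sqrt (by linarith)).symm⟩
  obtain ⟨r, hr, rfl⟩ : ∃ r, 0 ≤ r ∧ s = 4 + r := ⟨s - 4, by linarith, by ring⟩
  obtain ⟨W, hW, rfl⟩ : ∃ W, 0 ≤ W ∧ Y = ((4 + r) ^ 2) ^ 2 + W :=
    ⟨Y - ((4 + r) ^ 2) ^ 2, by linarith, by ring⟩
  rw [sqrt_sq (by linarith), scaledQuadratic]
  ring_nf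
  positivity

end ScaledQuadratic

/-- the root t = (-B + √Δ)/(2A) satisfies q ≤ t ≤ q^{3/2} for q ≥ 16, m ≥ 3. -/
theorem stmt3 (q m : ℕ) (hq : 16 ≤ q) (hm : 3 ≤ m)
    (A B C Δ t : ℝ)
    (hA : A = (1 / 2) * (((q : ℝ) ^ m - 1) / ((q : ℝ) - 1)) ^ 2)
    (hB : B = (((q : ℝ) ^ m - 1) / (2 * ((q : ℝ) - 1) ^ 2 * ((q : ℝ) + 1))) *
      (4 * (q : ℝ) ^ (m - 1) - (q : ℝ) ^ (m + 1) - (q : ℝ) ^ m + (q : ℝ) - 3))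
    (hC : C = -((q : ℝ) ^ (2 * m) + (q : ℝ) ^ m + 1))
    (hΔ : Δ = B ^ 2 - 4 * A * C)
    (ht : t = (-B + Real.sqrt Δ) / (2 * A)) :
    (q : ℝ) ≤ t ∧ t ≤ (q : ℝ) ^ ((3 : ℝ) / 2) := by
  obtain ⟨n, rfl⟩ : ∃ n, m = n + 1 := ⟨m - 1, by omega⟩
  have hq16 : (16 : ℝ) ≤ q := by exact_mod_cast hq
  have hY : (q : ℝ) ^ 2 ≤ (q : ℝ) ^ n := pow_le_pow_right₀ (by linarith) (by omega)
  have hq₁ : (q : ℝ) - 1 ≠ 0 := by linarith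
  have hqm : (q : ℝ) ^ (n + 1) - 1 ≠ 0 := (sub_pos.2 (one_lt_pow₀ (by linarith) n.succ_ne_zero)).ne'
  have hden : 0 < 2 * ((q : ℝ) - 1) ^ 2 * ((q : ℝ) + 1) := by positivity
  have hf : ∀ z, A * (z * z) + B * z + C =
      scaledQuadratic q ((q : ℝ) ^ n) z / (2 * ((q : ℝ) - 1) ^ 2 * ((q : ℝ) + 1)) := by
    intro z
    rw [hA, hB, hC, scaledQuadratic, Nat.add_sub_cancel]
    field_simp
    ring
  have hA₀ : 0 < A := by rw [hA]; positivity
  have hC₀ : C ≤ 0 := by rw [hC, neg_nonpos]; positivity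
  have hpow : (q : ℝ) ^ ((3 : ℝ) / 2) = √q ^ 3 := by
    rw [rpow_div_two_eq_sqrt _ (by positivity)]; norm_cast
  rw [ht, hΔ, ← discrim, hpow]
  exact ⟨le_quadratic_root hA₀ <| by
      rw [hf]; exact div_nonpos_of_nonpos_of_nonneg (scaledQuadratic_self_nonpos hq16 hY) hden.le,
    quadratic_root_le hA₀ hC₀ (by positivity) <| by
      rw [hf]; exact div_nonneg (scaledQuadratic_sqrt_cube_nonneg hq16 hY) hden.le⟩
end

section
/- Let P be a finite projective plane structure on the point set of PG(2, Q) (Q = q^m a prime power), and let L_1, ..., L_t be pairwise disjoint sets of points such that every line ℓ of PG(2, Q) satisfies exactly one of: (a) there is a unique i with |ℓ ∩ L_i| ≥ 2 and ℓ ∩ L_j = ∅ for j ≠ i; or (b) there are exactly two indices i_1 ≠ i_2 with |ℓ ∩ L_{i_1}| = |ℓ ∩ L_{i_2}| = 1 and ℓ ∩ L_j = ∅ otherwise. Then B = L_1 ∪ ... ∪ L_t is a 2-fold blocking set of PG(2, Q) (every line meets B in at least 2 points), and B is minimal: for every point P ∈ B there exists a line through P meeting B in exactly 2 points, provided t ≥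 2 and each L_i is nonempty. -/
/-!
Since the `Lᵢ` are disjoint, `|ℓ ∩ B| = ∑ᵢ |ℓ ∩ Lᵢ|`, and either alternative of the dichotomy makes
this sum at least `2`. A line joining points of two different `Lᵢ` meets two of them, so it is of
the second kind and meets `B` in exactly two points; when `t ≥ 2` and every `Lᵢ` is nonempty, every
point of `B` lies on such a line.
-/

open Finset

/-- `n i` stands for the number of points a line has in common with `Lᵢ`. -/
def IntersectionDichotomy {ι : Type*} (n : ι → ℕ) : Prop :=
  (∃ i, 2 ≤ n i ∧ ∀ j, j ≠ i → n j = 0) ∨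
    ∃ i₁ i₂, i₁ ≠ i₂ ∧ n i₁ = 1 ∧ n i₂ = 1 ∧ ∀ j, j ≠ i₁ → j ≠ i₂ → n j = 0

namespace IntersectionDichotomy

variable {ι : Type*} [Fintype ι] {n : ι → ℕ}

theorem sum_eq_two_of_ne_zero (h : IntersectionDichotomy n) {i j : ι} (hij : i ≠ j)
    (hi : n i ≠ 0) (hj : n j ≠ 0) : ∑ k, n k = 2 := by
  rcases h with ⟨k, -, hk⟩ | ⟨i₁, i₂, h12, h1, h2, hzero⟩
  · rcases eq_or_ne i k with rfl | hik
    · exact absurd (hk j hij.symm) hj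
    · exact absurd (hk i hik) hi
  · rw [Fintype.sum_eq_add i₁ i₂ h12 fun k hk => hzero k hk.1 hk.2, h1, h2]

theorem two_le_sum (h : IntersectionDichotomy n) : 2 ≤ ∑ k, n k := by
  rcases h with ⟨i, hi, -⟩ | ⟨i₁, i₂, h12, h1, h2, hzero⟩
  · exact hi.trans (single_le_sum (fun _ _ => Nat.zero_le _) (mem_univ i))
  · rw [Fintype.sum_eq_add i₁ i₂ h12 fun k hk => hzero k hk.1 hk.2, h1, h2]

end IntersectionDichotomy

theorem Finset.card_filter_biUnion {ι α : Type*} [DecidableEq α] {s : Finset ι}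
    {f : ι → Finset α} (hf : (s : Set ι).PairwiseDisjoint f) (p : α → Prop) [DecidablePred p] :
    ((s.biUnion f).filter p).card = ∑ i ∈ s, ((f i).filter p).card := by
  rw [filter_biUnion, card_biUnion]
  exact fun i hi j hj hij => (hf hi hj hij).mono (filter_subset _ _) (filter_subset _ _)

/-- pairwise disjoint point sets L₁,…,L_t in PG(2, Q) such that every line
either meets a unique Lᵢ in ≥ 2 points (and misses the others), or meets exactly two of
them in exactly one point each (and misses the others), have union a minimal 2-fold
blocking set (minimality provided t ≥ 2 and each Lᵢ is nonempty). -/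
theorem stmt13 (q m t : ℕ) (hq : 2 ≤ q) (hm : 1 ≤ m)
    (P L : Type) [Membership P L] [Configuration.ProjectivePlane P L]
    [Fintype P] [Fintype L] [DecidableEq P] [∀ ℓ : L, DecidablePred (· ∈ ℓ)]
    (horder : Configuration.ProjectivePlane.order P L = q ^ m)
    (Li : Fin t → Finset P)
    (hdisj : ∀ i j : Fin t, i ≠ j → Disjoint (Li i) (Li j))
    (hlines : ∀ ℓ : L,
      (∃ i : Fin t, 2 ≤ ((Li i).filter (· ∈ ℓ)).card ∧
        ∀ j : Fin t, j ≠ i → ((Li j).filter (· ∈ ℓ)).card = 0) ∨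
      (∃ i₁ i₂ : Fin t, i₁ ≠ i₂ ∧ ((Li i₁).filter (· ∈ ℓ)).card = 1 ∧
        ((Li i₂).filter (· ∈ ℓ)).card = 1 ∧
        ∀ j : Fin t, j ≠ i₁ → j ≠ i₂ → ((Li j).filter (· ∈ ℓ)).card = 0)) :
    (∀ ℓ : L, 2 ≤ (((univ : Finset (Fin t)).biUnion Li).filter (· ∈ ℓ)).card) ∧
    (2 ≤ t → (∀ i : Fin t, (Li i).Nonempty) →
      ∀ p ∈ (univ : Finset (Fin t)).biUnion Li,
        ∃ ℓ : L, p ∈ ℓ ∧ (((univ : Finset (Fin t)).biUnion Li).filter (· ∈ ℓ)).card = 2) := by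
  have hdich (ℓ : L) : IntersectionDichotomy fun i => ((Li i).filter (· ∈ ℓ)).card := hlines ℓ
  have hcard (ℓ : L) := card_filter_biUnion (s := univ) (fun i _ j _ hij => hdisj i j hij) (· ∈ ℓ)
  refine ⟨fun ℓ => hcard ℓ ▸ (hdich ℓ).two_le_sum, fun ht hne p hp => ?_⟩
  obtain ⟨i, -, hpi⟩ := mem_biUnion.mp hp
  obtain ⟨j, hji⟩ := Fintype.exists_ne_of_one_lt_card (by rwa [Fintype.card_fin]) i
  obtain ⟨r, hrj⟩ := hne j
  have hpr : p ≠ r := fun h => disjoint_left.mp (hdisj i j hji.symm) hpi (h ▸ hrj)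
  obtain ⟨hpℓ, hrℓ⟩ := Configuration.HasLines.mkLine_ax (L := L) hpr
  refine ⟨_, hpℓ, (hcard _).trans ((hdich _).sum_eq_two_of_ne_zero hji.symm ?_ ?_)⟩
  · exact card_ne_zero_of_mem (mem_filter.mpr ⟨hpi, hpℓ⟩)
  · exact card_ne_zero_of_mem (mem_filter.mpr ⟨hrj, hrℓ⟩)
end

section
/- Let V be a k-dimensional F_{q^m}-vector space with the standard scalar product, ⊥ the F_{q^m}-orthogonal complement and ⊥' the F_q-orthogonal complement induced by composing with the trace Tr_{q^m/q}. Let U be an F_q-subspace of V with dim_{F_q}(U) = n, and let v ∈ V be nonzero. Then dim_{F_q}(U ∩ v^⊥) = n - m + dim_{F_q}(U^{⊥'} ∩ ⟨v⟩_{F_{q^m}}). -/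
/-!
The trace form of `K/F` is nondegenerate, hence so is `B(x, y) = Tr(x ⬝ᵥ y)` on `V = K^k`, and
`⊥'` is the `B`-orthogonal complement. A `K`-subspace is closed under `K`-scalars, so its
`B`-orthogonal is its `K`-orthogonal; in particular `v^⊥ = ⟨v⟩^⊥'`, so `dim_F v^⊥ = mk - m` and
`(v^⊥)^⊥' = ⟨v⟩` by biduality. Grassmann's formula together with `(U + W)^⊥' = U^⊥' ∩ W^⊥'`
gives `dim (U ∩ W) + dim V = dim U + dim W + dim (U^⊥' ∩ W^⊥')` for any nondegenerate form.
-/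

open Module LinearMap.BilinForm Matrix

namespace LinearMap.BilinForm

theorem orthogonal_sup {R M : Type*} [CommRing R] [AddCommGroup M] [Module R M]
    (B : LinearMap.BilinForm R M) (U W : Submodule R M) :
    B.orthogonal (U ⊔ W) = B.orthogonal U ⊓ B.orthogonal W := by
  refine le_antisymm (le_inf (orthogonal_le le_sup_left) (orthogonal_le le_sup_right)) ?_
  rintro x ⟨hU, hW⟩ z hz
  obtain ⟨a, ha, b, hb, rfl⟩ := Submodule.mem_sup.mp hz
  rw [map_add, LinearMap.add_apply, hU a ha, hW b hb, add_zero]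

theorem finrank_inf_add_finrank_eq {K V : Type*} [Field K] [AddCommGroup V] [Module K V]
    [FiniteDimensional K V] {B : LinearMap.BilinForm K V} (hB : B.Nondegenerate)
    (U W : Submodule K V) :
    finrank K ↥(U ⊓ W) + finrank K V =
      finrank K U + finrank K W + finrank K ↥(B.orthogonal U ⊓ B.orthogonal W) := by
  have hsum := Submodule.finrank_sup_add_finrank_inf_eq U W
  have hperp := finrank_add_finrank_orthogonal' (B := B) (U ⊔ W)
  rw [hB.ker_eq_bot, inf_bot_eq, finrank_bot, add_zero, orthogonal_sup] at hperp
  omega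

end LinearMap.BilinForm

theorem Submodule.finrank_restrictScalars {F K M : Type*} [Field F] [Field K] [Algebra F K]
    [AddCommGroup M] [Module K M] [Module F M] [IsScalarTower F K M] (S : Submodule K M) :
    finrank F ↥(S.restrictScalars F) = finrank F K * finrank K S := by
  rw [((S.restrictScalarsEquiv F K M).restrictScalars F).finrank_eq, Module.finrank_mul_finrank]

section TraceDotForm

variable (F K ι : Type*) [Field F] [Field K] [Algebra F K] [Fintype ι]

noncomputable def traceDotForm : LinearMap.BilinForm F (ι → K) :=
  (Algebra.trace F K).compBilinForm (dotProductBilin K K)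

variable {F K ι}

theorem traceDotForm_apply (x y : ι → K) :
    traceDotForm F K ι x y = Algebra.trace F K (x ⬝ᵥ y) := rfl

theorem traceDotForm_isSymm : (traceDotForm F K ι).IsSymm :=
  ⟨fun x y => by rw [traceDotForm_apply, traceDotForm_apply, dotProduct_comm]⟩

theorem mem_traceDotForm_orthogonal_iff {T : Submodule F (ι → K)} {y : ι → K} :
    y ∈ (traceDotForm F K ι).orthogonal T ↔ ∀ w ∈ T, Algebra.trace F K (y ⬝ᵥ w) = 0 := by
  simp only [mem_orthogonal_iff, traceDotForm_apply, dotProduct_comm _ y]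

variable [FiniteDimensional F K] [Algebra.IsSeparable F K]

theorem traceDotForm_nondegenerate : (traceDotForm F K ι).Nondegenerate := by
  classical
  refine (LinearMap.IsRefl.nondegenerate_iff_separatingLeft (B := traceDotForm F K ι)
    traceDotForm_isSymm.isRefl).mpr fun x hx => ?_
  funext i
  refine (traceForm_nondegenerate F K).1 (x i) fun c => ?_
  simpa [traceDotForm_apply, dotProduct_single] using hx (Pi.single i c)

theorem traceDotForm_orthogonal_restrictScalars (S : Submodule K (ι → K)) :
    (traceDotForm F K ι).orthogonal (S.restrictScalars F) =
      (LinearMap.BilinForm.orthogonal (dotProductBilin K K) S).restrictScalars F := by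
  ext y
  simp only [Submodule.restrictScalars_mem, mem_orthogonal_iff, traceDotForm_apply,
    dotProductBilin_apply_apply]
  refine ⟨fun h w hw => (traceForm_nondegenerate F K).1 _ fun c => ?_, fun h w hw => by
    rw [h w hw, map_zero]⟩
  rw [Algebra.traceForm_apply, mul_comm, ← smul_eq_mul, ← smul_dotProduct]
  exact h _ (S.smul_mem c hw)

end TraceDotForm

theorem stmt15_general (m k n : ℕ)
    (F K : Type) [Field F] [Field K] [Algebra F K] [Fintype K]
    (hm : Module.finrank F K = m)
    (U : Submodule F (Fin k → K)) (hn : Module.finrank F U = n)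
    (perpF : Submodule F (Fin k → K) → Submodule F (Fin k → K))
    (hperpF : ∀ T : Submodule F (Fin k → K),
      (perpF T : Set (Fin k → K)) =
        {y : Fin k → K | ∀ w ∈ T, Algebra.trace F K (∑ i, y i * w i) = 0})
    (v : Fin k → K) (hv : v ≠ 0)
    (W : Submodule K (Fin k → K))
    (hW : (W : Set (Fin k → K)) = {y : Fin k → K | ∑ i, v i * y i = 0}) :
    (Module.finrank F ↥(U ⊓ W.restrictScalars F) : ℤ) =
      (n : ℤ) - m +
        (Module.finrank F ↥(perpF U ⊓ (Submodule.span K {v}).restrictScalars F) : ℤ) := by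
  set B := traceDotForm F K (Fin k)
  have hB : B.Nondegenerate := traceDotForm_nondegenerate
  have hperpU : perpF U = B.orthogonal U :=
    SetLike.ext' <| (hperpF U).trans <| Set.ext fun _ => mem_traceDotForm_orthogonal_iff.symm
  have hWspan : W.restrictScalars F = B.orthogonal ((Submodule.span K {v}).restrictScalars F) := by
    rw [traceDotForm_orthogonal_restrictScalars, orthogonal_span_singleton_eq_toLin_ker]
    congr 1
    exact SetLike.ext' hW
  have hspan : finrank F ↥((Submodule.span K {v}).restrictScalars F) = m := by
    rw [Submodule.finrank_restrictScalars, finrank_span_singleton hv, hm, mul_one]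
  have hWdim : finrank F ↥(W.restrictScalars F) + m = finrank F (Fin k → K) := by
    rw [hWspan, ← hspan, add_comm, B.finrank_add_finrank_orthogonal', hB.ker_eq_bot, inf_bot_eq,
      finrank_bot, add_zero]
  have key := finrank_inf_add_finrank_eq hB U (W.restrictScalars F)
  rw [← hperpU, hWspan, orthogonal_orthogonal hB traceDotForm_isSymm.isRefl, ← hWspan, hn] at key
  omega

/-- with the standard scalar product on V = F_{q^m}^k,
dim_{F_q}(U ∩ v^⊥) = n - m + dim_{F_q}(U^{⊥'} ∩ ⟨v⟩_{F_{q^m}}). -/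
theorem stmt15 (q m k n : ℕ) (hq : ∃ p r : ℕ, p.Prime ∧ 0 < r ∧ q = p ^ r)
    (F K : Type) [Field F] [Field K] [Algebra F K] [Fintype F] [Fintype K]
    (hF : Fintype.card F = q) (hK : Fintype.card K = q ^ m)
    (hm : Module.finrank F K = m)
    (U : Submodule F (Fin k → K)) (hn : Module.finrank F U = n)
    (perpF : Submodule F (Fin k → K) → Submodule F (Fin k → K))
    (hperpF : ∀ T : Submodule F (Fin k → K),
      (perpF T : Set (Fin k → K)) =
        {y : Fin k → K | ∀ w ∈ T, Algebra.trace F K (∑ i, y i * w i) = 0})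
    (v : Fin k → K) (hv : v ≠ 0)
    (W : Submodule K (Fin k → K))
    (hW : (W : Set (Fin k → K)) = {y : Fin k → K | ∑ i, v i * y i = 0}) :
    (Module.finrank F ↥(U ⊓ W.restrictScalars F) : ℤ) =
      (n : ℤ) - m +
        (Module.finrank F ↥(perpF U ⊓ (Submodule.span K {v}).restrictScalars F) : ℤ) :=
  stmt15_general m k n F K hm U hn perpF hperpF v hv W hW
end
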